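/- For every a > 0, every real constant c, and every integer n ≥ 2, the hyperbolic Ruijsenaars–Schneider function F(u) = c − (a²/4)/sinh²(au/2) (defined for real u ≠ 0) satisfies the classical functional equation: T_n(F, x) = 0 for all pairwise distinct real x₁, …, xₙ. -/

import Mathlib

open Polynomial Finset

namespace RSaux


/-- derivative of a Finset product -/
lemma derivative_fin_prod {ι : Type*} [DecidableEq ι] (s : Finset ι) (f : ι → ℝ[X]) :
    derivative (∏ i ∈ s, f i) = ∑ i ∈ s, (∏ j ∈ s.erase i, f j) * derivative (f i) := by
  induction s using Finset.induction_on with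
  | empty => simp
  | @insert a s ha ih =>
      have hsum : ∑ i ∈ s, (∏ j ∈ (insert a s).erase i, f j) * derivative (f i)
          = ∑ i ∈ s, f a * ((∏ j ∈ s.erase i, f j) * derivative (f i)) := by
        refine Finset.sum_congr rfl fun i hi => ?_
        have hai : a ≠ i := fun h => ha (h ▸ hi)
        rw [Finset.erase_insert_of_ne hai,
          Finset.prod_insert (fun h => ha (Finset.mem_of_mem_erase h))]
        ring
      rw [Finset.prod_insert ha, derivative_mul, Finset.sum_insert ha, Finset.erase_insert ha,
        hsum, ih, Finset.mul_sum, mul_comm (derivative (f a)) (∏ j ∈ s, f j)]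

/-- `(X - C r)^2` divides `p` if `r` is a double root. -/
lemma sq_dvd_of_double_root {p : ℝ[X]} {r : ℝ} (h0 : p.eval r = 0)
    (h1 : (derivative p).eval r = 0) : (X - C r) ^ 2 ∣ p := by
  obtain ⟨u, hu⟩ := (dvd_iff_isRoot).mpr h0
  have hq : u.eval r = 0 := by
    have := congrArg derivative hu
    rw [derivative_mul, derivative_sub, derivative_X, derivative_C, sub_zero] at this
    have h2 := congrArg (eval r) this
    simp [h1] at h2
    simpa using h2.symm
  obtain ⟨v, hv⟩ := (dvd_iff_isRoot).mpr hq
  exact ⟨v, by rw [hu, hv]; ring⟩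



variable {n : ℕ}

/-- `G(z_k, z_m) = c - A z_k z_m / (z_k - z_m)^2` -/
noncomputable def gg (z : Fin n → ℝ) (c A : ℝ) (k m : Fin n) : ℝ :=
  c - A * (z k * z m) / (z k - z m) ^ 2

/-- numerator `e_{km} = c (z_k - z_m)^2 - A z_k z_m` -/
noncomputable def ee (z : Fin n → ℝ) (c A : ℝ) (k m : Fin n) : ℝ :=
  c * (z k - z m) ^ 2 - A * (z k * z m)

noncomputable def SS (z : Fin n → ℝ) (c A : ℝ) (k : Fin n) : ℝ :=
  ∑ l ∈ Finset.univ.erase k, z l * (z k + z l) / (z k - z l) ^ 3 *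
    ∏ m ∈ (Finset.univ.erase k).erase l, gg z c A k m

noncomputable def al (z : Fin n → ℝ) (c A : ℝ) (k : Fin n) : ℝ :=
  -A * z k * ∏ m ∈ Finset.univ.erase k, gg z c A k m

noncomputable def be (z : Fin n → ℝ) (c A : ℝ) (k : Fin n) : ℝ :=
  -(A ^ 2) * z k * SS z c A k

noncomputable def qq (z : Fin n → ℝ) (m : Fin n) : ℝ[X] := (X - C (z m)) ^ 2

noncomputable def nn (z : Fin n → ℝ) (c A : ℝ) (m : Fin n) : ℝ[X] :=
  C c * (X - C (z m)) ^ 2 - C (A * z m) * X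

noncomputable def Dj (z : Fin n → ℝ) (j : Fin n) : ℝ[X] := ∏ m ∈ Finset.univ.erase j, qq z m

noncomputable def PP (z : Fin n → ℝ) (c A : ℝ) : ℝ[X] :=
  (∏ m, nn z c A m) - C (c ^ n) * (∏ m, qq z m)
    - ∑ j, X * (C (al z c A j) + C (be z c A j) * (X - C (z j))) * Dj z j

section evals

variable (z : Fin n → ℝ) (c A : ℝ) (k : Fin n)

lemma ev_nn (m : Fin n) : (nn z c A m).eval (z k) = ee z c A k m := by
  simp [nn, ee]
  ring

lemma ev_dnn (m : Fin n) (y : ℝ) :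
    (derivative (nn z c A m)).eval y = 2 * c * (y - z m) - A * z m := by
  simp [nn, derivative_pow]
  ring

lemma ev_q (m : Fin n) (y : ℝ) : (qq z m).eval y = (y - z m) ^ 2 := by simp [qq]

lemma ev_dq (m : Fin n) (y : ℝ) : (derivative (qq z m)).eval y = 2 * (y - z m) := by
  simp [qq, derivative_pow]

lemma ev_Dj_self : (Dj z k).eval (z k) = ∏ m ∈ Finset.univ.erase k, (z k - z m) ^ 2 := by
  simp [Dj, eval_prod, qq]

lemma ev_Dj_ne {j : Fin n} (h : j ≠ k) : (Dj z j).eval (z k) = 0 := by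
  rw [Dj, eval_prod]
  exact Finset.prod_eq_zero (Finset.mem_erase.mpr ⟨Ne.symm h, Finset.mem_univ k⟩)
    (by simp [qq])

lemma ev_dDj_ne {j : Fin n} (h : j ≠ k) : (derivative (Dj z j)).eval (z k) = 0 := by
  rw [Dj, derivative_fin_prod, eval_finset_sum]
  refine Finset.sum_eq_zero fun i hi => ?_
  rw [eval_mul]
  rcases eq_or_ne i k with rfl | hik
  · rw [ev_dq]; simp
  · rw [eval_prod]
    have hk : k ∈ (Finset.univ.erase j).erase i :=
      Finset.mem_erase.mpr ⟨Ne.symm hik, Finset.mem_erase.mpr ⟨Ne.symm h, Finset.mem_univ k⟩⟩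
    rw [Finset.prod_eq_zero hk (by simp [qq])]
    ring

lemma ev_dDj_self : (derivative (Dj z k)).eval (z k) =
    ∑ i ∈ Finset.univ.erase k, (∏ m ∈ (Finset.univ.erase k).erase i, (z k - z m) ^ 2)
      * (2 * (z k - z i)) := by
  rw [Dj, derivative_fin_prod, eval_finset_sum]
  refine Finset.sum_congr rfl fun i hi => ?_
  rw [eval_mul, ev_dq, eval_prod]
  congr 1
  exact Finset.prod_congr rfl fun m _ => by simp [qq]

lemma ev_D : (∏ m, qq z m).eval (z k) = 0 := by
  rw [eval_prod]
  exact Finset.prod_eq_zero (Finset.mem_univ k) (by simp [qq])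

lemma ev_dD : (derivative (∏ m, qq z m)).eval (z k) = 0 := by
  rw [derivative_fin_prod, eval_finset_sum]
  refine Finset.sum_eq_zero fun i _ => ?_
  rw [eval_mul]
  rcases eq_or_ne i k with rfl | hik
  · rw [ev_dq]; simp
  · rw [eval_prod, Finset.prod_eq_zero (Finset.mem_erase.mpr ⟨Ne.symm hik, Finset.mem_univ k⟩)
      (by simp [qq])]
    ring

lemma ev_N : (∏ m, nn z c A m).eval (z k) = ∏ m, ee z c A k m := by
  rw [eval_prod]; exact Finset.prod_congr rfl fun m _ => ev_nn z c A k m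

lemma ev_dN : (derivative (∏ m, nn z c A m)).eval (z k) =
    ∑ i, (∏ m ∈ Finset.univ.erase i, ee z c A k m) * (2 * c * (z k - z i) - A * z i) := by
  rw [derivative_fin_prod, eval_finset_sum]
  refine Finset.sum_congr rfl fun i _ => ?_
  rw [eval_mul, ev_dnn, eval_prod]
  congr 1
  exact Finset.prod_congr rfl fun m _ => ev_nn z c A k m

end evals


section ident

variable (z : Fin n → ℝ) (c A : ℝ) (k : Fin n) (hz : Function.Injective z)

lemma g_mul_d (hz : Function.Injective z) {m : Fin n} (h : m ≠ k) :
    gg z c A k m * (z k - z m) ^ 2 = ee z c A k m := by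
  have hd : z k - z m ≠ 0 := sub_ne_zero.mpr fun hh => h (hz hh).symm
  rw [gg, ee, sub_mul, div_mul_cancel₀ _ (pow_ne_zero 2 hd)]

lemma prod_gd (hz : Function.Injective z) (s : Finset (Fin n)) (hs : k ∉ s) :
    (∏ m ∈ s, gg z c A k m) * (∏ m ∈ s, (z k - z m) ^ 2) = ∏ m ∈ s, ee z c A k m := by
  rw [← Finset.prod_mul_distrib]
  exact Finset.prod_congr rfl fun m hm => g_mul_d z c A k hz (fun h => hs (h ▸ hm))

/-- identity (I) : value condition at `z k` -/
lemma idI (hz : Function.Injective z) :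
    ∏ m, ee z c A k m = z k * al z c A k * ∏ m ∈ Finset.univ.erase k, (z k - z m) ^ 2 := by
  rw [← Finset.mul_prod_erase Finset.univ _ (Finset.mem_univ k)]
  have h1 : ee z c A k k = -(A * z k ^ 2) := by simp only [ee]; ring
  have h2 : z k * al z c A k * ∏ m ∈ Finset.univ.erase k, (z k - z m) ^ 2
      = -(A * z k ^ 2) * ((∏ m ∈ Finset.univ.erase k, gg z c A k m)
          * ∏ m ∈ Finset.univ.erase k, (z k - z m) ^ 2) := by
    rw [al]; ring
  rw [h1, h2, prod_gd z c A k hz _ (Finset.notMem_erase k _)]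

/-- identity (II) : derivative condition at `z k` -/
lemma idII (hz : Function.Injective z) :
    ∑ i, (∏ m ∈ Finset.univ.erase i, ee z c A k m) * (2 * c * (z k - z i) - A * z i)
    = (al z c A k + z k * be z c A k) * (∏ m ∈ Finset.univ.erase k, (z k - z m) ^ 2)
      + z k * al z c A k *
        ∑ i ∈ Finset.univ.erase k,
          (∏ m ∈ (Finset.univ.erase k).erase i, (z k - z m) ^ 2) * (2 * (z k - z i)) := by
  -- split off the i = k term on the left
  rw [← Finset.add_sum_erase Finset.univ _ (Finset.mem_univ k)]
  have halprod : al z c A k * ∏ m ∈ Finset.univ.erase k, (z k - z m) ^ 2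
      = (∏ m ∈ Finset.univ.erase k, ee z c A k m) * (2 * c * (z k - z k) - A * z k) := by
    rw [al, mul_assoc, prod_gd z c A k hz _ (Finset.notMem_erase k _)]
    ring
  rw [add_mul, halprod]
  rw [add_right_comm, add_assoc]
  congr 1
  -- remaining sums over erase k
  rw [be, SS, Finset.mul_sum, Finset.mul_sum, Finset.mul_sum, Finset.sum_mul,
    ← Finset.sum_add_distrib]
  refine Finset.sum_congr rfl fun i hi => ?_
  have hik : i ≠ k := (Finset.mem_erase.mp hi).1
  have hd : z k - z i ≠ 0 := sub_ne_zero.mpr fun hh => hik (hz hh).symm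
  -- rewrite the full products in terms of products over (erase k).erase i
  have hsplit : ∏ m ∈ Finset.univ.erase i, ee z c A k m
      = -(A * z k ^ 2) * ∏ m ∈ (Finset.univ.erase k).erase i, ee z c A k m := by
    rw [← Finset.mul_prod_erase (Finset.univ.erase i) _
      (Finset.mem_erase.mpr ⟨hik.symm, Finset.mem_univ k⟩), Finset.erase_right_comm]
    congr 1
    simp only [ee]; ring
  have hdsplit : ∏ m ∈ Finset.univ.erase k, (z k - z m) ^ 2
      = (z k - z i) ^ 2 * ∏ m ∈ (Finset.univ.erase k).erase i, (z k - z m) ^ 2 := by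
    rw [← Finset.mul_prod_erase (Finset.univ.erase k) _ hi]
  have hgsplit : ∏ m ∈ Finset.univ.erase k, gg z c A k m
      = gg z c A k i * ∏ m ∈ (Finset.univ.erase k).erase i, gg z c A k m := by
    rw [← Finset.mul_prod_erase (Finset.univ.erase k) _ hi]
  have hmem : k ∉ (Finset.univ.erase k).erase i := fun h =>
    (Finset.notMem_erase k Finset.univ) (Finset.mem_of_mem_erase h)
  have hpe : (∏ m ∈ (Finset.univ.erase k).erase i, gg z c A k m)
      * (∏ m ∈ (Finset.univ.erase k).erase i, (z k - z m) ^ 2)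
      = ∏ m ∈ (Finset.univ.erase k).erase i, ee z c A k m :=
    prod_gd z c A k hz _ hmem
  rw [hsplit, hdsplit, al, hgsplit, ← hpe, gg]
  field_simp
  ring
end ident

lemma ev_P_root (z : Fin n → ℝ) (c A : ℝ) (hz : Function.Injective z) (k : Fin n) :
    (PP z c A).eval (z k) = 0 := by
  rw [PP, eval_sub, eval_sub, eval_mul, eval_finset_sum, ev_N, ev_D, eval_C]
  have hsum : ∑ j, (X * (C (al z c A j) + C (be z c A j) * (X - C (z j))) * Dj z j).eval (z k)
      = z k * al z c A k * ∏ m ∈ Finset.univ.erase k, (z k - z m) ^ 2 := by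
    rw [Finset.sum_eq_single k]
    · rw [eval_mul, eval_mul, ev_Dj_self, eval_add, eval_mul, eval_sub, eval_X, eval_C,
        eval_C, eval_C, sub_self, mul_zero, add_zero]
    · intro j _ hj
      rw [eval_mul, ev_Dj_ne z k hj, mul_zero]
    · intro h; exact absurd (Finset.mem_univ k) h
  rw [hsum, idI z c A k hz]
  ring

lemma ev_P_deriv (z : Fin n → ℝ) (c A : ℝ) (hz : Function.Injective z) (k : Fin n) :
    (derivative (PP z c A)).eval (z k) = 0 := by
  have hder : derivative (PP z c A) = derivative (∏ m, nn z c A m)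
      - C (c ^ n) * derivative (∏ m, qq z m)
      - ∑ j, ((C (al z c A j) + C (be z c A j) * (X - C (z j)) + X * C (be z c A j)) * Dj z j
          + X * (C (al z c A j) + C (be z c A j) * (X - C (z j))) * derivative (Dj z j)) := by
    rw [PP, derivative_sub, derivative_sub, derivative_C_mul, derivative_sum]
    congr 1
    refine Finset.sum_congr rfl fun j _ => ?_
    rw [derivative_mul, derivative_mul, derivative_X, derivative_add, derivative_C,
      derivative_mul, derivative_C, derivative_sub, derivative_X, derivative_C]
    ring
  rw [hder, eval_sub, eval_sub, eval_mul, eval_finset_sum, ev_dN, ev_dD, mul_zero, sub_zero]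
  have hsum : ∑ j, (((C (al z c A j) + C (be z c A j) * (X - C (z j)) + X * C (be z c A j))
        * Dj z j
        + X * (C (al z c A j) + C (be z c A j) * (X - C (z j))) * derivative (Dj z j)).eval (z k))
      = (al z c A k + z k * be z c A k) * (∏ m ∈ Finset.univ.erase k, (z k - z m) ^ 2)
        + z k * al z c A k *
          ∑ i ∈ Finset.univ.erase k,
            (∏ m ∈ (Finset.univ.erase k).erase i, (z k - z m) ^ 2) * (2 * (z k - z i)) := by
    rw [Finset.sum_eq_single k]
    · rw [eval_add, eval_mul, eval_mul, ev_Dj_self, ev_dDj_self]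
      simp only [eval_add, eval_mul, eval_sub, eval_X, eval_C]
      ring
    · intro j _ hj
      rw [eval_add, eval_mul, eval_mul, ev_Dj_ne z k hj, ev_dDj_ne z k hj, mul_zero, mul_zero,
        add_zero]
    · intro h; exact absurd (Finset.mem_univ k) h
  rw [hsum, idII z c A k hz]
  ring

section deg

variable (z : Fin n → ℝ) (c A : ℝ)

lemma monic_qq (m : Fin n) : (qq z m).Monic := (monic_X_sub_C _).pow 2

lemma natDegree_qq (m : Fin n) : (qq z m).natDegree = 2 := by
  simp [qq, natDegree_pow]

lemma monic_Dj (j : Fin n) : (Dj z j).Monic :=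
  monic_prod_of_monic _ _ fun m _ => monic_qq z m

lemma natDegree_Dj (j : Fin n) : (Dj z j).natDegree = (n - 1) * 2 := by
  rw [Dj, natDegree_prod _ _ fun m _ => (monic_qq z m).ne_zero]
  rw [Finset.sum_congr rfl fun m _ => natDegree_qq z m, Finset.sum_const,
    Finset.card_erase_of_mem (Finset.mem_univ j), Finset.card_univ, Fintype.card_fin,
    smul_eq_mul]

lemma monic_D : (∏ m, qq z m).Monic := monic_prod_of_monic _ _ fun m _ => monic_qq z m

lemma natDegree_D : (∏ m, qq z m).natDegree = 2 * n := by
  rw [natDegree_prod _ _ fun m _ => (monic_qq z m).ne_zero,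
    Finset.sum_congr rfl fun m _ => natDegree_qq z m, Finset.sum_const,
    Finset.card_univ, Fintype.card_fin, smul_eq_mul]
  ring

lemma natDegree_nn_le (m : Fin n) : (nn z c A m).natDegree ≤ 2 := by
  refine (natDegree_sub_le _ _).trans (max_le ?_ ?_)
  · exact (natDegree_C_mul_le _ _).trans (by simp [natDegree_pow])
  · exact (natDegree_C_mul_le _ _).trans (by simp)

lemma natDegree_PP_le : (PP z c A).natDegree ≤ 2 * n := by
  refine (natDegree_sub_le _ _).trans (max_le ((natDegree_sub_le _ _).trans (max_le ?_ ?_)) ?_)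
  · refine (natDegree_prod_le _ _).trans ?_
    calc ∑ m : Fin n, (nn z c A m).natDegree ≤ ∑ _m : Fin n, 2 :=
          Finset.sum_le_sum fun m _ => natDegree_nn_le z c A m
      _ = 2 * n := by simp [Finset.card_univ, mul_comm]
  · exact (natDegree_C_mul_le _ _).trans (le_of_eq (natDegree_D z))
  · refine natDegree_sum_le_of_forall_le _ _ fun j _ => ?_
    have hn1 : 1 ≤ n := j.pos
    refine (natDegree_mul_le).trans ?_
    have h1 : (X * (C (al z c A j) + C (be z c A j) * (X - C (z j)))).natDegree ≤ 2 := by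
      refine (natDegree_mul_le).trans ?_
      have hw : (C (al z c A j) + C (be z c A j) * (X - C (z j))).natDegree ≤ 1 := by
        refine (natDegree_add_le _ _).trans (max_le (by simp) ?_)
        exact (natDegree_C_mul_le _ _).trans (by simp)
      rw [natDegree_X]
      omega
    have h2 := natDegree_Dj z j
    omega

lemma P_eq_zero (hz0 : ∀ i, z i ≠ 0) (hz : Function.Injective z) : PP z c A = 0 := by
  by_contra hP
  have hXdvd : (X : ℝ[X]) ∣ PP z c A := by
    rw [X_dvd_iff, coeff_zero_eq_eval_zero, PP, eval_sub, eval_sub, eval_mul,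
      eval_finset_sum, eval_prod, eval_prod, eval_C]
    have h1 : ∏ m, (nn z c A m).eval 0 = c ^ n * ∏ m, z m ^ 2 := by
      have h := Finset.prod_congr rfl fun (m : Fin n) (_ : m ∈ Finset.univ) =>
        (by simp [nn] : (nn z c A m).eval 0 = c * z m ^ 2)
      rw [h, Finset.prod_mul_distrib, Finset.prod_const, Finset.card_univ, Fintype.card_fin]
    have h2 : ∏ m, (qq z m).eval 0 = ∏ m, z m ^ 2 := by
      refine Finset.prod_congr rfl fun m _ => ?_
      simp [qq]
    have h3 : ∑ j, (X * (C (al z c A j) + C (be z c A j) * (X - C (z j))) * Dj z j).eval 0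
        = ∑ j : Fin n, (0:ℝ) * ((C (al z c A j) + C (be z c A j) * (X - C (z j))).eval 0
            * (Dj z j).eval 0) := by
      refine Finset.sum_congr rfl fun j _ => ?_
      rw [eval_mul, eval_mul, eval_X]
      ring
    rw [h1, h2, h3]
    simp
  have hQdvd : (∏ m, qq z m) ∣ PP z c A := by
    refine Finset.prod_dvd_of_coprime ?_ fun k _ =>
      sq_dvd_of_double_root (ev_P_root z c A hz k) (ev_P_deriv z c A hz k)
    exact fun i _ j _ hij =>
      ((pairwise_coprime_X_sub_C hz) hij).pow
  have hcop : IsCoprime (X : ℝ[X]) (∏ m, qq z m) := by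
    refine IsCoprime.prod_right fun m _ => ?_
    have h := isCoprime_X_sub_C_of_isUnit_sub
      (by simpa using (hz0 m) : IsUnit ((0:ℝ) - z m))
    simpa [qq] using h.pow_right (n := 2)
  have hdvd : X * ∏ m, qq z m ∣ PP z c A := hcop.mul_dvd hXdvd hQdvd
  have hnd : (X * ∏ m, qq z m).natDegree = 2 * n + 1 := by
    rw [(monic_X).natDegree_mul (monic_D z), natDegree_X, natDegree_D]
    ring
  have hle := natDegree_le_of_dvd hdvd hP
  rw [hnd] at hle
  have := natDegree_PP_le z c A
  omega

lemma sum_be_eq_zero (hz0 : ∀ i, z i ≠ 0) (hz : Function.Injective z) :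
    ∑ k, be z c A k = 0 := by
  have hP := P_eq_zero z c A hz0 hz
  have h0 : (PP z c A).coeff (2 * n) = 0 := by rw [hP]; simp
  rw [PP, coeff_sub, coeff_sub, coeff_C_mul] at h0
  have hcN : (∏ m, nn z c A m).coeff (2 * n) = c ^ n := by
    have h := coeff_prod_of_natDegree_le (s := (Finset.univ : Finset (Fin n)))
      (nn z c A) 2 (fun m _ => natDegree_nn_le z c A m)
    rw [Finset.card_univ, Fintype.card_fin] at h
    have hcoeff2 : ∀ m : Fin n, (nn z c A m).coeff 2 = c := by
      intro m
      have hm : (((X : ℝ[X]) - C (z m)) ^ 2).coeff 2 = 1 := by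
        have hmon : (((X : ℝ[X]) - C (z m)) ^ 2).Monic := (monic_X_sub_C _).pow 2
        have hd2 : (((X : ℝ[X]) - C (z m)) ^ 2).natDegree = 2 := by simp [natDegree_pow]
        have hcn := hmon.coeff_natDegree
        rwa [hd2] at hcn
      rw [nn, coeff_sub, coeff_C_mul, coeff_C_mul, hm, coeff_X]
      simp
    rw [mul_comm 2 n]
    rw [h, Finset.prod_congr rfl fun m _ => hcoeff2 m, Finset.prod_const, Finset.card_univ,
      Fintype.card_fin]
  have hcD : (∏ m, qq z m).coeff (2 * n) = 1 := by
    rw [← natDegree_D z]; exact (monic_D z).coeff_natDegree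
  have hcSum : (∑ j, X * (C (al z c A j) + C (be z c A j) * (X - C (z j))) * Dj z j).coeff (2 * n)
      = ∑ j, be z c A j := by
    rw [finset_sum_coeff]
    refine Finset.sum_congr rfl fun j _ => ?_
    have hn1 : 1 ≤ n := j.pos
    have hrw : X * (C (al z c A j) + C (be z c A j) * (X - C (z j))) * Dj z j
        = C (al z c A j) * (X * Dj z j)
          + C (be z c A j) * (X * ((X - C (z j)) * Dj z j)) := by ring
    rw [hrw, coeff_add, coeff_C_mul, coeff_C_mul]
    have hc1 : (X * Dj z j).coeff (2 * n) = 0 := by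
      refine coeff_eq_zero_of_natDegree_lt ?_
      refine lt_of_le_of_lt (natDegree_mul_le) ?_
      rw [natDegree_X, natDegree_Dj]
      omega
    have hc2 : (X * ((X - C (z j)) * Dj z j)).coeff (2 * n) = 1 := by
      have hmon : (X * ((X - C (z j)) * Dj z j)).Monic :=
        monic_X.mul ((monic_X_sub_C _).mul (monic_Dj z j))
      have hd : (X * ((X - C (z j)) * Dj z j)).natDegree = 2 * n := by
        rw [monic_X.natDegree_mul ((monic_X_sub_C _).mul (monic_Dj z j)),
          (monic_X_sub_C _).natDegree_mul (monic_Dj z j), natDegree_X, natDegree_X_sub_C,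
          natDegree_Dj]
        omega
      rw [← hd]; exact hmon.coeff_natDegree
    rw [hc1, hc2]
    ring
  rw [hcN, hcD, hcSum] at h0
  linarith

theorem key_sum (hz0 : ∀ i, z i ≠ 0) (hz : Function.Injective z) (hA : A ≠ 0) :
    ∑ k, z k * SS z c A k = 0 := by
  have h := sum_be_eq_zero z c A hz0 hz
  have h2 : ∑ k, be z c A k = -(A ^ 2) * ∑ k, z k * SS z c A k := by
    rw [Finset.mul_sum]
    exact Finset.sum_congr rfl fun k _ => by rw [be]; ring
  rw [h2] at h
  rcases mul_eq_zero.mp h with h3 | h3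
  · exact absurd h3 (by simpa using pow_ne_zero 2 hA)
  · exact h3
end deg


lemma sinh_exp (a s t : ℝ) :
    Real.sinh (a * (s - t) / 2)
      = (Real.exp (a * s) - Real.exp (a * t))
        / (2 * Real.exp (a * s / 2) * Real.exp (a * t / 2)) := by
  have hs : Real.exp (a * s) = Real.exp (a * s / 2) ^ 2 := by
    rw [sq, ← Real.exp_add]; ring_nf
  have ht : Real.exp (a * t) = Real.exp (a * t / 2) ^ 2 := by
    rw [sq, ← Real.exp_add]; ring_nf
  rw [Real.sinh_eq, hs, ht,
    show a * (s - t) / 2 = a * s / 2 - a * t / 2 from by ring,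
    show -(a * s / 2 - a * t / 2) = a * t / 2 - a * s / 2 from by ring,
    Real.exp_sub, Real.exp_sub]
  have h1 := Real.exp_ne_zero (a * s / 2)
  have h2 := Real.exp_ne_zero (a * t / 2)
  field_simp

lemma cosh_exp (a s t : ℝ) :
    Real.cosh (a * (s - t) / 2)
      = (Real.exp (a * s) + Real.exp (a * t))
        / (2 * Real.exp (a * s / 2) * Real.exp (a * t / 2)) := by
  have hs : Real.exp (a * s) = Real.exp (a * s / 2) ^ 2 := by
    rw [sq, ← Real.exp_add]; ring_nf
  have ht : Real.exp (a * t) = Real.exp (a * t / 2) ^ 2 := by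
    rw [sq, ← Real.exp_add]; ring_nf
  rw [Real.cosh_eq, hs, ht,
    show a * (s - t) / 2 = a * s / 2 - a * t / 2 from by ring,
    show -(a * s / 2 - a * t / 2) = a * t / 2 - a * s / 2 from by ring,
    Real.exp_sub, Real.exp_sub]
  have h1 := Real.exp_ne_zero (a * s / 2)
  have h2 := Real.exp_ne_zero (a * t / 2)
  field_simp

lemma F_val (a c s t : ℝ) (ha : a ≠ 0) (hst : s ≠ t) :
    c - (a ^ 2 / 4) / (Real.sinh (a * (s - t) / 2)) ^ 2
      = c - a ^ 2 * (Real.exp (a * s) * Real.exp (a * t))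
          / (Real.exp (a * s) - Real.exp (a * t)) ^ 2 := by
  have hne : Real.exp (a * s) - Real.exp (a * t) ≠ 0 := by
    refine sub_ne_zero.mpr fun h => hst ?_
    exact mul_left_cancel₀ ha (Real.exp_eq_exp.mp h)
  have h1 := Real.exp_ne_zero (a * s / 2)
  have h2 := Real.exp_ne_zero (a * t / 2)
  have hs : Real.exp (a * s) = Real.exp (a * s / 2) ^ 2 := by
    rw [sq, ← Real.exp_add]; ring_nf
  have ht : Real.exp (a * t) = Real.exp (a * t / 2) ^ 2 := by
    rw [sq, ← Real.exp_add]; ring_nf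
  rw [sinh_exp]
  rw [hs, ht] at hne ⊢
  congr 1
  field_simp
  ring

lemma F_deriv (a c s t : ℝ) (ha : a ≠ 0) (hst : s ≠ t) :
    deriv (fun u => c - (a ^ 2 / 4) / (Real.sinh (a * u / 2)) ^ 2) (s - t)
      = a ^ 3 * (Real.exp (a * s) * Real.exp (a * t)
            * (Real.exp (a * s) + Real.exp (a * t)))
          / (Real.exp (a * s) - Real.exp (a * t)) ^ 3 := by
  have harg : a * (s - t) / 2 ≠ 0 :=
    div_ne_zero (mul_ne_zero ha (sub_ne_zero.mpr hst)) two_ne_zero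
  have hsh : Real.sinh (a * (s - t) / 2) ≠ 0 := Real.sinh_ne_zero.mpr harg
  have h1 : HasDerivAt (fun u : ℝ => a * u / 2) (a / 2) (s - t) := by
    simpa using ((hasDerivAt_id (s - t)).const_mul a).div_const 2
  have h2 : HasDerivAt (fun u => Real.sinh (a * u / 2))
      (Real.cosh (a * (s - t) / 2) * (a / 2)) (s - t) :=
    (Real.hasDerivAt_sinh _).comp _ h1
  have h3 : HasDerivAt (fun u => (Real.sinh (a * u / 2)) ^ 2)
      ((2 : ℕ) * (Real.sinh (a * (s - t) / 2)) ^ 1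
        * (Real.cosh (a * (s - t) / 2) * (a / 2))) (s - t) := h2.pow 2
  have h4 : HasDerivAt (fun u => (a ^ 2 / 4) / (Real.sinh (a * u / 2)) ^ 2)
      ((0 * (Real.sinh (a * (s - t) / 2)) ^ 2
          - (a ^ 2 / 4) * ((2 : ℕ) * (Real.sinh (a * (s - t) / 2)) ^ 1
              * (Real.cosh (a * (s - t) / 2) * (a / 2))))
        / ((Real.sinh (a * (s - t) / 2)) ^ 2) ^ 2) (s - t) :=
    (hasDerivAt_const (s - t) (a ^ 2 / 4)).div h3 (pow_ne_zero 2 hsh)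
  have h5 : HasDerivAt (fun u => c - (a ^ 2 / 4) / (Real.sinh (a * u / 2)) ^ 2) _ (s - t) :=
    (hasDerivAt_const (s - t) c).sub h4
  rw [h5.deriv]
  have hne : Real.exp (a * s) - Real.exp (a * t) ≠ 0 := by
    refine sub_ne_zero.mpr fun h => hst ?_
    exact mul_left_cancel₀ ha (Real.exp_eq_exp.mp h)
  have h1' := Real.exp_ne_zero (a * s / 2)
  have h2' := Real.exp_ne_zero (a * t / 2)
  have hs : Real.exp (a * s) = Real.exp (a * s / 2) ^ 2 := by
    rw [sq, ← Real.exp_add]; ring_nf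
  have ht : Real.exp (a * t) = Real.exp (a * t / 2) ^ 2 := by
    rw [sq, ← Real.exp_add]; ring_nf
  rw [sinh_exp, cosh_exp]
  rw [hs, ht] at hne ⊢
  field_simp
  ring


end RSaux


/-- The classical sum `T_n(F, x) = ∑_j ∑_{l ≠ j} F′(x_j − x_l) ∏_{m ≠ j,l} F(x_j − x_m)`. -/
noncomputable def classicalSumR (F : ℝ → ℝ) (n : ℕ) (x : Fin n → ℝ) : ℝ :=
  ∑ j : Fin n, ∑ l ∈ Finset.univ.erase j,
    deriv F (x j - x l) * ∏ m ∈ (Finset.univ.erase j).erase l, F (x j - x m)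

/-- For every `a > 0`, real `c` and `n ≥ 2`, the hyperbolic Ruijsenaars–Schneider
function `F(u) = c − (a²/4)/sinh²(au/2)` satisfies the classical functional
equation `T_n(F, x) = 0` for pairwise distinct real `x₁, …, xₙ`. -/
theorem classicalSum_hyperbolic_RS (a c : ℝ) (ha : 0 < a) (n : ℕ) (hn : 2 ≤ n)
    (x : Fin n → ℝ) (hx : Function.Injective x) :
    classicalSumR (fun u => c - (a ^ 2 / 4) / (Real.sinh (a * u / 2)) ^ 2) n x = 0 := by
  classical
  have hz0 : ∀ i : Fin n, (fun j => Real.exp (a * x j)) i ≠ 0 := fun i => (Real.exp_pos _).ne'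
  have hzinj : Function.Injective (fun j : Fin n => Real.exp (a * x j)) := by
    intro i j h
    exact hx (mul_left_cancel₀ ha.ne' (Real.exp_eq_exp.mp h))
  have hkey := RSaux.key_sum (fun j : Fin n => Real.exp (a * x j)) c (a ^ 2) hz0 hzinj
    (pow_ne_zero 2 ha.ne')
  have hmain : ∀ j : Fin n, ∑ l ∈ Finset.univ.erase j,
      deriv (fun u => c - (a ^ 2 / 4) / (Real.sinh (a * u / 2)) ^ 2) (x j - x l)
        * ∏ m ∈ (Finset.univ.erase j).erase l,
            (c - (a ^ 2 / 4) / (Real.sinh (a * (x j - x m) / 2)) ^ 2)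
      = a ^ 3 * (Real.exp (a * x j) * RSaux.SS (fun j => Real.exp (a * x j)) c (a ^ 2) j) := by
    intro j
    rw [RSaux.SS, Finset.mul_sum, Finset.mul_sum]
    refine Finset.sum_congr rfl fun l hl => ?_
    have hlj : l ≠ j := (Finset.mem_erase.mp hl).1
    have hne : x j ≠ x l := fun h => hlj (hx h).symm
    have hprod : ∏ m ∈ (Finset.univ.erase j).erase l,
        (c - (a ^ 2 / 4) / (Real.sinh (a * (x j - x m) / 2)) ^ 2)
        = ∏ m ∈ (Finset.univ.erase j).erase l,
            RSaux.gg (fun j => Real.exp (a * x j)) c (a ^ 2) j m := by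
      refine Finset.prod_congr rfl fun m hm => ?_
      have hmj : m ≠ j := (Finset.mem_erase.mp (Finset.mem_of_mem_erase hm)).1
      have hne2 : x j ≠ x m := fun h => hmj (hx h).symm
      rw [RSaux.gg]
      exact RSaux.F_val a c (x j) (x m) ha.ne' hne2
    rw [hprod, RSaux.F_deriv a c (x j) (x l) ha.ne' hne]
    have hzne : Real.exp (a * x j) - Real.exp (a * x l) ≠ 0 := by
      refine sub_ne_zero.mpr fun h => hne ?_
      exact mul_left_cancel₀ ha.ne' (Real.exp_eq_exp.mp h)
    field_simp
  calc classicalSumR (fun u => c - (a ^ 2 / 4) / (Real.sinh (a * u / 2)) ^ 2) n x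
      = ∑ j : Fin n, a ^ 3
          * (Real.exp (a * x j) * RSaux.SS (fun j => Real.exp (a * x j)) c (a ^ 2) j) := by
        rw [classicalSumR]
        exact Finset.sum_congr rfl fun j _ => hmain j
    _ = a ^ 3 * ∑ j : Fin n,
          Real.exp (a * x j) * RSaux.SS (fun j => Real.exp (a * x j)) c (a ^ 2) j := by
        rw [Finset.mul_sum]
    _ = 0 := by rw [hkey]; ring
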